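/- With σ₀ and σ₁ the rational weight-functions of the 1-level subdivision, the interior fundamental reconstruction polynomials decompose as α_{R}^{(M₋,M₊)}_ℓ(ξ) = σ₀(ξ) α_{R}^{(M₋,M₊-1)}_ℓ(ξ) + σ₁(ξ) α_{R}^{(M₋-1,M₊)}_ℓ(ξ) for all ℓ ∈ {-M₋+1,...,M₊-1} and all ξ with α_{R}^{(M₋-1,M₊)}_{M₊}(ξ) ≠ 0. -/

import Mathlib

open intervalIntegral Polynomial

/-- Lagrange interpolation basis polynomial for node `l` on the integer nodes `{a,…,b}`. -/
noncomputable def lagrangeBasis (a b l : ℤ) : Polynomial ℝ :=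
  ∏ k ∈ (Finset.Icc a b).erase l,
    Polynomial.C (((l : ℝ) - (k : ℝ))⁻¹) * (Polynomial.X - Polynomial.C (k : ℝ))


noncomputable def antider (p : Polynomial ℝ) : Polynomial ℝ :=
  p.sum fun n a => C (a / (n+1)) * X^(n+1)

lemma derivative_antider (p : Polynomial ℝ) : derivative (antider p) = p := by
  conv_rhs => rw [← Polynomial.sum_C_mul_X_pow_eq p]
  rw [antider, Polynomial.sum_def, Polynomial.sum_def, map_sum]
  refine Finset.sum_congr rfl fun n hn => ?_
  rw [derivative_C_mul_X_pow]
  congr 2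
  push_cast
  field_simp

lemma integral_poly (p : Polynomial ℝ) (u v : ℝ) :
    (∫ η in u..v, p.eval η) = (antider p).eval v - (antider p).eval u := by
  refine intervalIntegral.integral_eq_sub_of_hasDerivAt
    (f := fun x => (antider p).eval x) (fun x _ => ?_) ?_
  · have := (antider p).hasDerivAt x
    rwa [derivative_antider] at this
  · exact (p.continuous).intervalIntegrable _ _

/-- Injectivity of the sliding-average operator on polynomials. -/
lemma avg_inj (p q : Polynomial ℝ)
    (h : ∀ ξ : ℝ, (∫ η in (ξ - 1/2)..(ξ + 1/2), p.eval η)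
        = ∫ η in (ξ - 1/2)..(ξ + 1/2), q.eval η) : p = q := by
  set r := p - q with hr
  have hint : ∀ ξ : ℝ, (antider r).eval (ξ + 1/2) - (antider r).eval (ξ - 1/2) = 0 := by
    intro ξ
    rw [← integral_poly]
    have : (∫ η in (ξ - 1/2)..(ξ + 1/2), r.eval η)
        = (∫ η in (ξ - 1/2)..(ξ + 1/2), p.eval η) - ∫ η in (ξ - 1/2)..(ξ + 1/2), q.eval η := by
      rw [← intervalIntegral.integral_sub (p.continuous.intervalIntegrable _ _)
        (q.continuous.intervalIntegrable _ _)]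
      simp [hr]
    rw [this, h, sub_self]
  set R := antider r with hR
  have hshift : ∀ x : ℝ, R.eval (x + 1) = R.eval x := by
    intro x
    have := hint (x + 1/2)
    have h1 : x + 1/2 + 1/2 = x + 1 := by ring
    have h2 : x + 1/2 - 1/2 = x := by ring
    rw [h1, h2] at this
    linarith
  have hn : ∀ n : ℕ, R.eval (n : ℝ) = R.eval 0 := by
    intro n
    induction n with
    | zero => norm_num
    | succ k ih => push_cast; rw [hshift]; exact ih
  have hconst : R - C (R.eval 0) = 0 := by
    apply Polynomial.eq_zero_of_infinite_isRoot
    apply Set.infinite_of_injective_forall_mem (f := fun n : ℕ => (n : ℝ))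
      Nat.cast_injective
    intro n
    simp [Polynomial.IsRoot, hn n]
  have hr0 : r = 0 := by
    have : R = C (R.eval 0) := by linear_combination (norm := ring_nf) hconst
    have hd := derivative_antider r
    rw [← hR, this] at hd
    simp at hd
    exact hd.symm
  exact sub_eq_zero.mp (hr.symm.trans hr0)

lemma lb_eval_self (a b l : ℤ) : (lagrangeBasis a b l).eval (l : ℝ) = 1 := by
  rw [lagrangeBasis, eval_prod]
  refine Finset.prod_eq_one fun k hk => ?_
  have hkl : k ≠ l := Finset.ne_of_mem_erase hk
  have : ((l : ℝ) - (k : ℝ)) ≠ 0 := by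
    simpa using sub_ne_zero.mpr (fun hc => hkl (by exact_mod_cast hc.symm))
  simp [this]

lemma lb_eval_ne (a b l k : ℤ) (hk : k ∈ Finset.Icc a b) (hkl : k ≠ l) :
    (lagrangeBasis a b l).eval (k : ℝ) = 0 := by
  rw [lagrangeBasis, eval_prod]
  refine Finset.prod_eq_zero (Finset.mem_erase.mpr ⟨hkl, hk⟩) ?_
  simp

lemma lb_natDegree (a b l : ℤ) :
    (lagrangeBasis a b l).natDegree ≤ ((Finset.Icc a b).erase l).card := by
  rw [lagrangeBasis]
  refine le_trans (Polynomial.natDegree_prod_le _ _) ?_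
  calc ∑ k ∈ (Finset.Icc a b).erase l,
        (Polynomial.C (((l : ℝ) - (k : ℝ))⁻¹) * (Polynomial.X - Polynomial.C (k : ℝ))).natDegree
      ≤ ∑ _k ∈ (Finset.Icc a b).erase l, 1 := by
        refine Finset.sum_le_sum fun k _ => ?_
        refine le_trans (Polynomial.natDegree_mul_le) ?_
        rw [Polynomial.natDegree_C, Polynomial.natDegree_X_sub_C]
    _ = _ := by simp

/-- Two polynomials of small degree agreeing on an integer finset are equal. -/
lemma eq_of_eval_on (p q : Polynomial ℝ) (s : Finset ℤ)
    (hp : p.natDegree < s.card) (hq : q.natDegree < s.card)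
    (h : ∀ k ∈ s, p.eval (k : ℝ) = q.eval (k : ℝ)) : p = q := by
  have : p - q = 0 := by
    apply Polynomial.eq_zero_of_natDegree_lt_card_of_eval_eq_zero (p - q)
      (f := fun k : s => ((k : ℤ) : ℝ))
    · intro x y hxy
      simp only at hxy
      exact Subtype.ext (by exact_mod_cast hxy)
    · intro i; simp [h i i.2]
    · rw [Fintype.card_coe]
      exact lt_of_le_of_lt (Polynomial.natDegree_sub_le p q) (by omega)
  linear_combination (norm := ring_nf) this

lemma natDegree_comb (p q : Polynomial ℝ) (c : ℝ) :
    (p + C c * q).natDegree ≤ max p.natDegree q.natDegree :=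
  le_trans (Polynomial.natDegree_add_le _ _)
    (max_le_max le_rfl (le_trans Polynomial.natDegree_mul_le (by simp)))

lemma natDegree_cmul (q : Polynomial ℝ) (c : ℝ) :
    (C c * q).natDegree ≤ q.natDegree :=
  le_trans Polynomial.natDegree_mul_le (by simp)

section LagIdentities
variable (a b l : ℤ)

lemma LI (hM : 2 ≤ a + b) (hl : l ∈ Finset.Icc (-a+1) (b-1)) :
    lagrangeBasis (-a) b l
      = lagrangeBasis (-a) (b-1) l
        + C (-(lagrangeBasis (-a) (b-1) l).eval ((b:ℤ):ℝ)) * lagrangeBasis (-a) b b := by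
  rw [Finset.mem_Icc] at hl
  have c1 : (Finset.Icc (-a) b).card = (a+b+1).toNat := by rw [Int.card_Icc]; omega
  have c2 : (Finset.Icc (-a) (b-1)).card = (a+b).toNat := by rw [Int.card_Icc]; omega
  have d1 := lb_natDegree (-a) b l
  have d2 := lb_natDegree (-a) (b-1) l
  have d3 := lb_natDegree (-a) b b
  rw [Finset.card_erase_of_mem (by rw [Finset.mem_Icc]; omega), c1] at d1
  rw [Finset.card_erase_of_mem (by rw [Finset.mem_Icc]; omega), c2] at d2
  rw [Finset.card_erase_of_mem (by rw [Finset.mem_Icc]; omega), c1] at d3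
  apply eq_of_eval_on _ _ (Finset.Icc (-a) b)
  · rw [c1]; omega
  · rw [c1]
    refine lt_of_le_of_lt (natDegree_comb _ _ _) (max_lt (by omega) (by omega))
  · intro k hk
    rw [Finset.mem_Icc] at hk
    rw [eval_add, eval_mul, eval_C]
    by_cases hkb : k = b
    · rw [hkb]
      rw [lb_eval_ne (-a) b l b (by rw [Finset.mem_Icc]; omega) (by omega),
        lb_eval_self]
      ring
    · by_cases hkl : k = l
      · rw [hkl]
        rw [lb_eval_self, lb_eval_self,
          lb_eval_ne (-a) b b l (by rw [Finset.mem_Icc]; omega) (by omega)]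
        ring
      · rw [lb_eval_ne (-a) b l k (by rw [Finset.mem_Icc]; omega) hkl,
          lb_eval_ne (-a) (b-1) l k (by rw [Finset.mem_Icc]; omega) hkl,
          lb_eval_ne (-a) b b k (by rw [Finset.mem_Icc]; omega) (by omega)]
        ring

lemma LII (hM : 2 ≤ a + b) (hl : l ∈ Finset.Icc (-a+1) (b-1)) :
    lagrangeBasis (-(a-1)) b l
      = lagrangeBasis (-a) (b-1) l
        + C (-(lagrangeBasis (-a) (b-1) l).eval ((b:ℤ):ℝ)) * lagrangeBasis (-(a-1)) b b := by
  rw [Finset.mem_Icc] at hl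
  have c1 : (Finset.Icc (-(a-1)) b).card = (a+b).toNat := by rw [Int.card_Icc]; omega
  have c2 : (Finset.Icc (-a) (b-1)).card = (a+b).toNat := by rw [Int.card_Icc]; omega
  have c3 : (Finset.Icc (-a+1) b).card = (a+b).toNat := by rw [Int.card_Icc]; omega
  have d1 := lb_natDegree (-(a-1)) b l
  have d2 := lb_natDegree (-a) (b-1) l
  have d3 := lb_natDegree (-(a-1)) b b
  rw [Finset.card_erase_of_mem (by rw [Finset.mem_Icc]; omega), c1] at d1
  rw [Finset.card_erase_of_mem (by rw [Finset.mem_Icc]; omega), c2] at d2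
  rw [Finset.card_erase_of_mem (by rw [Finset.mem_Icc]; omega), c1] at d3
  apply eq_of_eval_on _ _ (Finset.Icc (-a+1) b)
  · rw [c3]; omega
  · rw [c3]
    refine lt_of_le_of_lt (natDegree_comb _ _ _) (max_lt (by omega) (by omega))
  · intro k hk
    rw [Finset.mem_Icc] at hk
    rw [eval_add, eval_mul, eval_C]
    by_cases hkb : k = b
    · rw [hkb]
      rw [lb_eval_ne (-(a-1)) b l b (by rw [Finset.mem_Icc]; omega) (by omega),
        lb_eval_self]
      ring
    · by_cases hkl : k = l
      · rw [hkl]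
        rw [lb_eval_self, lb_eval_self,
          lb_eval_ne (-(a-1)) b b l (by rw [Finset.mem_Icc]; omega) (by omega)]
        ring
      · rw [lb_eval_ne (-(a-1)) b l k (by rw [Finset.mem_Icc]; omega) hkl,
          lb_eval_ne (-a) (b-1) l k (by rw [Finset.mem_Icc]; omega) hkl,
          lb_eval_ne (-(a-1)) b b k (by rw [Finset.mem_Icc]; omega) (by omega)]
        ring

lemma LIII (hM : 2 ≤ a + b) :
    lagrangeBasis (-a) (b-1) (-a)
      = C ((lagrangeBasis (-a) (b-1) (-a)).eval ((b:ℤ):ℝ)) * lagrangeBasis (-(a-1)) b b := by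
  have c2 : (Finset.Icc (-a) (b-1)).card = (a+b).toNat := by rw [Int.card_Icc]; omega
  have c1 : (Finset.Icc (-(a-1)) b).card = (a+b).toNat := by rw [Int.card_Icc]; omega
  have c3 : (Finset.Icc (-a+1) b).card = (a+b).toNat := by rw [Int.card_Icc]; omega
  have d1 := lb_natDegree (-a) (b-1) (-a)
  have d2 := lb_natDegree (-(a-1)) b b
  rw [Finset.card_erase_of_mem (by rw [Finset.mem_Icc]; omega), c2] at d1
  rw [Finset.card_erase_of_mem (by rw [Finset.mem_Icc]; omega), c1] at d2
  apply eq_of_eval_on _ _ (Finset.Icc (-a+1) b)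
  · rw [c3]; omega
  · rw [c3]
    exact lt_of_le_of_lt (natDegree_cmul _ _) (by omega)
  · intro k hk
    rw [Finset.mem_Icc] at hk
    rw [eval_mul, eval_C]
    by_cases hkb : k = b
    · rw [hkb, lb_eval_self]
      ring
    · rw [lb_eval_ne (-a) (b-1) (-a) k (by rw [Finset.mem_Icc]; omega) (by omega),
        lb_eval_ne (-(a-1)) b b k (by rw [Finset.mem_Icc]; omega) (by omega)]
      ring

lemma LIV (hM : 2 ≤ a + b) :
    lagrangeBasis (-a) b (-a)
      = lagrangeBasis (-a) (b-1) (-a)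
        + C (-(lagrangeBasis (-a) (b-1) (-a)).eval ((b:ℤ):ℝ)) * lagrangeBasis (-a) b b := by
  have c1 : (Finset.Icc (-a) b).card = (a+b+1).toNat := by rw [Int.card_Icc]; omega
  have c2 : (Finset.Icc (-a) (b-1)).card = (a+b).toNat := by rw [Int.card_Icc]; omega
  have d1 := lb_natDegree (-a) b (-a)
  have d2 := lb_natDegree (-a) (b-1) (-a)
  have d3 := lb_natDegree (-a) b b
  rw [Finset.card_erase_of_mem (by rw [Finset.mem_Icc]; omega), c1] at d1
  rw [Finset.card_erase_of_mem (by rw [Finset.mem_Icc]; omega), c2] at d2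
  rw [Finset.card_erase_of_mem (by rw [Finset.mem_Icc]; omega), c1] at d3
  apply eq_of_eval_on _ _ (Finset.Icc (-a) b)
  · rw [c1]; omega
  · rw [c1]
    refine lt_of_le_of_lt (natDegree_comb _ _ _) (max_lt (by omega) (by omega))
  · intro k hk
    rw [Finset.mem_Icc] at hk
    rw [eval_add, eval_mul, eval_C]
    by_cases hka : k = -a
    · rw [hka]
      rw [show ((-a : ℤ) : ℝ) = ((-a : ℤ) : ℝ) from rfl]
      rw [lb_eval_self, lb_eval_self,
        lb_eval_ne (-a) b b (-a) (by rw [Finset.mem_Icc]; omega) (by omega)]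
      ring
    · by_cases hkb : k = b
      · rw [hkb]
        rw [lb_eval_ne (-a) b (-a) b (by rw [Finset.mem_Icc]; omega) (by omega),
          lb_eval_self]
        ring
      · rw [lb_eval_ne (-a) b (-a) k (by rw [Finset.mem_Icc]; omega) hka,
          lb_eval_ne (-a) (b-1) (-a) k (by rw [Finset.mem_Icc]; omega) hka,
          lb_eval_ne (-a) b b k (by rw [Finset.mem_Icc]; omega) hkb]
        ring

lemma lb_eval_b_ne_zero (hM : 2 ≤ a + b) :
    (lagrangeBasis (-a) (b-1) (-a)).eval ((b:ℤ):ℝ) ≠ 0 := by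
  rw [lagrangeBasis, eval_prod, Finset.prod_ne_zero_iff]
  intro k hk
  have hkna : k ≠ -a := Finset.ne_of_mem_erase hk
  have hk' := Finset.mem_of_mem_erase hk
  rw [Finset.mem_Icc] at hk'
  simp only [eval_mul, eval_C, eval_sub, eval_X]
  apply mul_ne_zero
  · apply inv_ne_zero
    apply sub_ne_zero.mpr
    exact_mod_cast fun h => hkna (by exact_mod_cast h.symm)
  · apply sub_ne_zero.mpr
    exact_mod_cast fun h => (by omega : b ≠ k) (by exact_mod_cast h)

end LagIdentities

lemma avg_comb (p q : Polynomial ℝ) (c : ℝ) (ξ : ℝ) :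
    (∫ η in (ξ - 1/2)..(ξ + 1/2), (p + C c * q).eval η)
      = (∫ η in (ξ - 1/2)..(ξ + 1/2), p.eval η)
        + c * ∫ η in (ξ - 1/2)..(ξ + 1/2), q.eval η := by
  rw [intervalIntegral.integral_congr (g := fun η => p.eval η + c * q.eval η)
    (fun η _ => by simp)]
  rw [intervalIntegral.integral_add (g := fun η => c * q.eval η) (p.continuous.intervalIntegrable _ _)
    (((continuous_const.mul q.continuous)).intervalIntegrable _ _),
    intervalIntegral.integral_const_mul]

lemma avg_cmul (q : Polynomial ℝ) (c : ℝ) (ξ : ℝ) :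
    (∫ η in (ξ - 1/2)..(ξ + 1/2), (C c * q).eval η)
      = c * ∫ η in (ξ - 1/2)..(ξ + 1/2), q.eval η := by
  rw [intervalIntegral.integral_congr (g := fun η => c * q.eval η) (fun η _ => by simp),
    intervalIntegral.integral_const_mul]

/-- with `σ₀ = α_R^{(M₋,M₊)}_{-M₋}/α_R^{(M₋,M₊-1)}_{-M₋}` and
`σ₁ = α_R^{(M₋,M₊)}_{M₊}/α_R^{(M₋-1,M₊)}_{M₊}`, the interior fundamental reconstruction
polynomials decompose as
`α_R^{(M₋,M₊)}_l(ξ) = σ₀(ξ) α_R^{(M₋,M₊-1)}_l(ξ) + σ₁(ξ) α_R^{(M₋-1,M₊)}_l(ξ)`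
for all `l ∈ {-M₋+1,…,M₊-1}` and all `ξ` with `α_R^{(M₋-1,M₊)}_{M₊}(ξ) ≠ 0`. -/
theorem reconstruction_interior_decomposition (Mm Mp : ℤ) (hM : 2 ≤ Mm + Mp)
    (αfull αleft αright : ℤ → Polynomial ℝ)
    (hfull : ∀ l ∈ Finset.Icc (-Mm) Mp,
      (αfull l).degree ≤ ((Mm + Mp).toNat : ℕ) ∧
      ∀ ξ : ℝ, (∫ η in (ξ - 1 / 2)..(ξ + 1 / 2), (αfull l).eval η)
        = (lagrangeBasis (-Mm) Mp l).eval ξ)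
    (hleft : ∀ l ∈ Finset.Icc (-Mm) (Mp - 1),
      (αleft l).degree ≤ ((Mm + Mp - 1).toNat : ℕ) ∧
      ∀ ξ : ℝ, (∫ η in (ξ - 1 / 2)..(ξ + 1 / 2), (αleft l).eval η)
        = (lagrangeBasis (-Mm) (Mp - 1) l).eval ξ)
    (hright : ∀ l ∈ Finset.Icc (-Mm + 1) Mp,
      (αright l).degree ≤ ((Mm + Mp - 1).toNat : ℕ) ∧
      ∀ ξ : ℝ, (∫ η in (ξ - 1 / 2)..(ξ + 1 / 2), (αright l).eval η)
        = (lagrangeBasis (-(Mm - 1)) Mp l).eval ξ) :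
    ∀ l ∈ Finset.Icc (-Mm + 1) (Mp - 1), ∀ ξ : ℝ, (αright Mp).eval ξ ≠ 0 →
      (αfull l).eval ξ
        = ((αfull (-Mm)).eval ξ / (αleft (-Mm)).eval ξ) * (αleft l).eval ξ
          + ((αfull Mp).eval ξ / (αright Mp).eval ξ) * (αright l).eval ξ := by
  intro l hl ξ hrne
  have hl' := hl
  rw [Finset.mem_Icc] at hl'
  -- memberships
  have hlf : l ∈ Finset.Icc (-Mm) Mp := by rw [Finset.mem_Icc]; omega
  have hll : l ∈ Finset.Icc (-Mm) (Mp - 1) := by rw [Finset.mem_Icc]; omega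
  have hlr : l ∈ Finset.Icc (-Mm + 1) Mp := by rw [Finset.mem_Icc]; omega
  have hbf : Mp ∈ Finset.Icc (-Mm) Mp := by rw [Finset.mem_Icc]; omega
  have hbr : Mp ∈ Finset.Icc (-Mm + 1) Mp := by rw [Finset.mem_Icc]; omega
  have haf : -Mm ∈ Finset.Icc (-Mm) Mp := by rw [Finset.mem_Icc]; omega
  have hal : -Mm ∈ Finset.Icc (-Mm) (Mp - 1) := by rw [Finset.mem_Icc]; omega
  set c : ℝ := -(lagrangeBasis (-Mm) (Mp-1) l).eval ((Mp:ℤ):ℝ) with hc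
  set ε : ℝ := (lagrangeBasis (-Mm) (Mp-1) (-Mm)).eval ((Mp:ℤ):ℝ) with he
  have hε : ε ≠ 0 := lb_eval_b_ne_zero Mm Mp hM
  -- the four linear identities
  have AI : αfull l = αleft l + C c * αfull Mp := by
    apply avg_inj
    intro ζ
    rw [(hfull l hlf).2 ζ, avg_comb, (hleft l hll).2 ζ, (hfull Mp hbf).2 ζ,
      LI Mm Mp l hM hl]
    simp [hc]
  have AII : αright l = αleft l + C c * αright Mp := by
    apply avg_inj
    intro ζ
    rw [(hright l hlr).2 ζ, avg_comb, (hleft l hll).2 ζ, (hright Mp hbr).2 ζ,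
      LII Mm Mp l hM hl]
    simp [hc]
  have AIII : αleft (-Mm) = C ε * αright Mp := by
    apply avg_inj
    intro ζ
    rw [(hleft (-Mm) hal).2 ζ, avg_cmul, (hright Mp hbr).2 ζ, LIII Mm Mp hM]
    simp [he]
  have AIV : αfull (-Mm) = αleft (-Mm) + C (-ε) * αfull Mp := by
    apply avg_inj
    intro ζ
    rw [(hfull (-Mm) haf).2 ζ, avg_comb, (hleft (-Mm) hal).2 ζ, (hfull Mp hbf).2 ζ,
      LIV Mm Mp hM]
    simp [he]
  -- evaluate at ξ
  set r : ℝ := (αright Mp).eval ξ with hrdef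
  set F : ℝ := (αfull Mp).eval ξ with hF
  set L : ℝ := (αleft l).eval ξ with hL
  have e1 : (αfull l).eval ξ = L + c * F := by rw [AI]; simp [hL, hF]
  have e2 : (αright l).eval ξ = L + c * r := by rw [AII]; simp [hL, hrdef]
  have e3 : (αleft (-Mm)).eval ξ = ε * r := by rw [AIII]; simp [hrdef]
  have e4 : (αfull (-Mm)).eval ξ = ε * r + (-ε) * F := by rw [AIV, eval_add, e3]; simp [hF]
  rw [e1, e2, e3, e4]
  field_simp
  ring
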